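/- Under the assumptions of the idealized COLA/Frank-Wolfe algorithm (β-smooth L bounded by M on a convex compact set K of diameter D, approximate linear optimization oracle with additive error ε, constant step size η = √M/(D√(βT))), the average Frank-Wolfe gap satisfies (1/T)·Σ_{t=1}^T g_t ≤ 2√(Mβ)·D/√T + ε. -/

import Mathlib

/-!
Smoothness gives the descent lemma `L y ≤ L x + ⟪∇L x, y - x⟫ + β/2 ‖y - x‖²` along segments
of `K`. Applied to a Frank-Wolfe step `W + η (V - W)`, and combined with the oracle inequality
`⟪∇L W, V - W⟫ ≤ ε - g`, it shows that each step decreases `L` by at least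
`η g - η ε - β η² D² / 2`. Summing over `T` steps telescopes, and the total decrease is at most
`M`, so the average gap is at most `M / (η T) + ε + β η D² / 2`; the chosen `η` balances the two
error terms.
-/

open RealInnerProductSpace Set

section

variable {E : Type*} [NormedAddCommGroup E] [InnerProductSpace ℝ E] {K : Set E}

theorem Convex.frankWolfe_iterate_mem (hK : Convex ℝ K) {η : ℝ} {W V : ℕ → E} (hη0 : 0 ≤ η)
    (hη1 : η ≤ 1) (hW1 : W 1 ∈ K) (hV : ∀ t, V t ∈ K)
    (hupdate : ∀ t, W (t + 1) = W t + η • (V t - W t))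
    {t : ℕ} (ht : 1 ≤ t) : W t ∈ K := by
  induction t, ht using Nat.le_induction with
  | base => exact hW1
  | succ t _ ih => rw [hupdate]; exact hK.add_smul_sub_mem ih (hV t) ⟨hη0, hη1⟩

variable [CompleteSpace E] {L : E → ℝ} {β D ε η : ℝ}

theorem hasDerivAt_comp_add_smul {x v : E} {s : ℝ} (hL : DifferentiableAt ℝ L (x + s • v)) :
    HasDerivAt (fun r : ℝ => L (x + r • v)) ⟪gradient L (x + s • v), v⟫ s := by
  rw [inner_gradient_left]
  refine hL.hasFDerivAt.comp_hasDerivAt s ?_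
  simpa using ((hasDerivAt_id s).smul_const v).const_add x

theorem Convex.le_add_inner_gradient_add_sq (hK : Convex ℝ K)
    (hL : ∀ z ∈ K, DifferentiableAt ℝ L z)
    (hsmooth : ∀ x ∈ K, ∀ y ∈ K, ‖gradient L x - gradient L y‖ ≤ β * ‖x - y‖)
    {x y : E} (hx : x ∈ K) (hy : y ∈ K) :
    L y ≤ L x + ⟪gradient L x, y - x⟫ + β / 2 * ‖y - x‖ ^ 2 := by
  set v := y - x
  have hmem : ∀ s ∈ Icc (0 : ℝ) 1, x + s • v ∈ K := fun s hs => hK.add_smul_sub_mem hx hy hs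
  have hderiv : ∀ s ∈ Icc (0 : ℝ) 1,
      HasDerivAt (fun r : ℝ => L (x + r • v)) ⟪gradient L (x + s • v), v⟫ s :=
    fun s hs => hasDerivAt_comp_add_smul (hL _ (hmem s hs))
  have hquad : ∀ s : ℝ, HasDerivAt
      (fun r : ℝ => L x + r * ⟪gradient L x, v⟫ + β / 2 * ‖v‖ ^ 2 * r ^ 2)
      (⟪gradient L x, v⟫ + β * ‖v‖ ^ 2 * s) s := fun s =>
    ((((hasDerivAt_id s).mul_const ⟪gradient L x, v⟫).const_add (L x)).add
      ((hasDerivAt_pow 2 s).const_mul (β / 2 * ‖v‖ ^ 2))).congr_deriv (by simp; ring)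
  have hslope : ∀ s ∈ Ico (0 : ℝ) 1,
      ⟪gradient L (x + s • v), v⟫ ≤ ⟪gradient L x, v⟫ + β * ‖v‖ ^ 2 * s := fun s hs =>
    calc ⟪gradient L (x + s • v), v⟫
        = ⟪gradient L x, v⟫ + ⟪gradient L (x + s • v) - gradient L x, v⟫ := by
          rw [inner_sub_left]; ring
      _ ≤ ⟪gradient L x, v⟫ + β * ‖(x + s • v) - x‖ * ‖v‖ := by
          gcongr
          exact (real_inner_le_norm _ _).trans (mul_le_mul_of_nonneg_right
            (hsmooth _ (hmem s (Ico_subset_Icc_self hs)) _ hx) (norm_nonneg v))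
      _ = ⟪gradient L x, v⟫ + β * ‖v‖ ^ 2 * s := by
          rw [add_sub_cancel_left, norm_smul, Real.norm_of_nonneg hs.1]; ring
  have key := image_le_of_deriv_right_le_deriv_boundary
    (fun s hs => (hderiv s hs).continuousAt.continuousWithinAt)
    (fun s hs => (hderiv s (Ico_subset_Icc_self hs)).hasDerivWithinAt)
    (by simp) (fun s _ => (hquad s).continuousAt.continuousWithinAt)
    (fun s _ => (hquad s).hasDerivWithinAt) hslope (right_mem_Icc.2 zero_le_one)
  simpa [v] using key

noncomputable def frankWolfeGap (K : Set E) (L : E → ℝ) (x : E) : ℝ :=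
  sSup ((fun U => ⟪gradient L x, x - U⟫) '' K)

theorem frankWolfeGap_le_of_inner_le_sInf_add (hKc : IsCompact K) (hKne : K.Nonempty) {x v : E}
    (hv : ⟪gradient L x, v⟫ ≤ sInf ((fun U => ⟪gradient L x, U⟫) '' K) + ε) :
    frankWolfeGap K L x ≤ ⟪gradient L x, x - v⟫ + ε := by
  have hbdd : BddBelow ((fun U => ⟪gradient L x, U⟫) '' K) :=
    hKc.bddBelow_image (innerSL ℝ (gradient L x)).continuous.continuousOn
  refine csSup_le (hKne.image _) ?_
  rintro _ ⟨U, hU, rfl⟩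
  have hmin := csInf_le hbdd (mem_image_of_mem _ hU)
  simp only [inner_sub_right] at hmin ⊢
  linarith

theorem Convex.mul_frankWolfeGap_le (hK : Convex ℝ K) (hL : ∀ z ∈ K, DifferentiableAt ℝ L z)
    (hsmooth : ∀ x ∈ K, ∀ y ∈ K, ‖gradient L x - gradient L y‖ ≤ β * ‖x - y‖) (hβ : 0 ≤ β)
    {x v : E} (hx : x ∈ K) (hv : v ∈ K) (hvx : ‖v - x‖ ≤ D) (hη0 : 0 ≤ η) (hη1 : η ≤ 1)
    (hgap : frankWolfeGap K L x ≤ ⟪gradient L x, x - v⟫ + ε) :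
    η * frankWolfeGap K L x ≤
      L x - L (x + η • (v - x)) + η * ε + β / 2 * η ^ 2 * D ^ 2 := by
  set y := x + η • (v - x)
  have hdescent := hK.le_add_inner_gradient_add_sq hL hsmooth hx
    (hK.add_smul_sub_mem hx hv ⟨hη0, hη1⟩ : y ∈ K)
  have hyx : y - x = η • (v - x) := add_sub_cancel_left x _
  have hlin : ⟪gradient L x, y - x⟫ = -(η * ⟪gradient L x, x - v⟫) := by
    rw [hyx, inner_smul_right, ← neg_sub x v, inner_neg_right, mul_neg]
  have hquad : ‖y - x‖ ^ 2 ≤ η ^ 2 * D ^ 2 := by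
    rw [hyx, norm_smul, Real.norm_of_nonneg hη0, mul_pow]
    gcongr
  nlinarith [mul_le_mul_of_nonneg_left hgap hη0,
    mul_le_mul_of_nonneg_left hquad (by positivity : 0 ≤ β / 2)]

variable {W V : ℕ → E}

theorem Convex.mul_sum_frankWolfeGap_le (hK : Convex ℝ K) (hKc : IsCompact K) (hKne : K.Nonempty)
    (hD : ∀ x ∈ K, ∀ y ∈ K, ‖x - y‖ ≤ D) (hL : ∀ z ∈ K, DifferentiableAt ℝ L z)
    (hsmooth : ∀ x ∈ K, ∀ y ∈ K, ‖gradient L x - gradient L y‖ ≤ β * ‖x - y‖) (hβ : 0 ≤ β)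
    {M : ℝ} (hbound : ∀ x ∈ K, ∀ y ∈ K, |L x - L y| ≤ M) (hη0 : 0 ≤ η) (hη1 : η ≤ 1)
    (hW1 : W 1 ∈ K) (hV : ∀ t, V t ∈ K) (hupdate : ∀ t, W (t + 1) = W t + η • (V t - W t))
    {T : ℕ} (hT : 1 ≤ T)
    (horacle : ∀ t ∈ Finset.Icc 1 T,
      ⟪gradient L (W t), V t⟫ ≤ sInf ((fun U => ⟪gradient L (W t), U⟫) '' K) + ε) :
    η * ∑ t ∈ Finset.Icc 1 T, frankWolfeGap K L (W t) ≤
      M + T * (η * ε + β / 2 * η ^ 2 * D ^ 2) := by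
  have hWK : ∀ t, 1 ≤ t → W t ∈ K := fun t ht => hK.frankWolfe_iterate_mem hη0 hη1 hW1 hV hupdate ht
  have hstep : ∀ t ∈ Finset.Icc 1 T, η * frankWolfeGap K L (W t) ≤
      (L (W t) - L (W (t + 1))) + (η * ε + β / 2 * η ^ 2 * D ^ 2) := by
    intro t ht
    have hWt := hWK t (Finset.mem_Icc.1 ht).1
    rw [hupdate, ← add_assoc]
    exact hK.mul_frankWolfeGap_le hL hsmooth hβ hWt (hV t) (hD _ (hV t) _ hWt) hη0 hη1
      (frankWolfeGap_le_of_inner_le_sInf_add hKc hKne (horacle t ht))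
  have hdecrease : L (W 1) - L (W (T + 1)) ≤ M :=
    (abs_le.1 (hbound _ hW1 _ (hWK _ (Nat.le_add_left 1 T)))).2
  have htel : ∑ t ∈ Finset.Icc 1 T, (L (W t) - L (W (t + 1))) = L (W 1) - L (W (T + 1)) := by
    simpa only [neg_sub_neg] using Finset.sum_Icc_sub hT (fun t => -L (W t))
  calc η * ∑ t ∈ Finset.Icc 1 T, frankWolfeGap K L (W t)
      = ∑ t ∈ Finset.Icc 1 T, η * frankWolfeGap K L (W t) := Finset.mul_sum ..
    _ ≤ ∑ t ∈ Finset.Icc 1 T,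
        ((L (W t) - L (W (t + 1))) + (η * ε + β / 2 * η ^ 2 * D ^ 2)) := Finset.sum_le_sum hstep
    _ = (L (W 1) - L (W (T + 1))) + T * (η * ε + β / 2 * η ^ 2 * D ^ 2) := by
        rw [Finset.sum_add_distrib, htel, Finset.sum_const, Nat.card_Icc, nsmul_eq_mul,
          add_tsub_cancel_right]
    _ ≤ M + T * (η * ε + β / 2 * η ^ 2 * D ^ 2) := by gcongr

end

theorem div_mul_add_half_mul_mul_sq_eq {M β D T η : ℝ} (hM : 0 < M) (hβ : 0 < β) (hD : 0 < D)
    (hT : 0 < T) (hη : η = √M / (D * √(β * T))) :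
    M / (η * T) + β / 2 * η * D ^ 2 = 3 / 2 * (√(M * β) * D / √T) := by
  obtain ⟨a, ha, rfl⟩ : ∃ a, 0 < a ∧ M = a ^ 2 := ⟨√M, by positivity, (Real.sq_sqrt hM.le).symm⟩
  obtain ⟨b, hb, rfl⟩ : ∃ b, 0 < b ∧ β = b ^ 2 := ⟨√β, by positivity, (Real.sq_sqrt hβ.le).symm⟩
  obtain ⟨c, hc, rfl⟩ : ∃ c, 0 < c ∧ T = c ^ 2 := ⟨√T, by positivity, (Real.sq_sqrt hT.le).symm⟩
  simp only [hη, ← mul_pow, Real.sqrt_sq, ha.le, hb.le, hc.le, mul_nonneg]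
  field_simp
  ring

theorem cola_convergence_general {d : ℕ} (K : Set (EuclideanSpace ℝ (Fin d)))
    (hK : Convex ℝ K) (hKc : IsCompact K) (hKne : K.Nonempty)
    (D β ε M : ℝ) (T : ℕ) (hT : 1 ≤ T)
    (hβ : 0 < β) (hM : 0 < M) (hDpos : 0 < D)
    (hD : ∀ x ∈ K, ∀ y ∈ K, ‖x - y‖ ≤ D)
    (L : EuclideanSpace ℝ (Fin d) → ℝ) (hL : Differentiable ℝ L)
    (hsmooth : ∀ x ∈ K, ∀ y ∈ K, ‖gradient L x - gradient L y‖ ≤ β * ‖x - y‖)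
    (hbound : ∀ x ∈ K, ∀ y ∈ K, |L x - L y| ≤ M)
    (η : ℝ) (hη : η = Real.sqrt M / (D * Real.sqrt (β * T))) (hη1 : η ≤ 1)
    (W V : ℕ → EuclideanSpace ℝ (Fin d))
    (hW1 : W 1 ∈ K) (hV : ∀ t, V t ∈ K)
    (horacle : ∀ t ∈ Finset.Icc 1 T,
      ⟪gradient L (W t), V t⟫ ≤ sInf ((fun U => ⟪gradient L (W t), U⟫) '' K) + ε)
    (hupdate : ∀ t, W (t + 1) = W t + η • (V t - W t))
    (g : ℕ → ℝ)
    (hg : ∀ t, g t = sSup ((fun U => ⟪gradient L (W t), W t - U⟫) '' K)) :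
    (1 / (T : ℝ)) * ∑ t ∈ Finset.Icc 1 T, g t ≤
      2 * Real.sqrt (M * β) * D / Real.sqrt T + ε := by
  have hTpos : (0 : ℝ) < T := by exact_mod_cast hT
  have hηpos : 0 < η := by rw [hη]; positivity
  have hsum := hK.mul_sum_frankWolfeGap_le hKc hKne hD (fun z _ => hL z) hsmooth hβ.le hbound
    hηpos.le hη1 hW1 hV hupdate hT horacle
  have htradeoff := div_mul_add_half_mul_mul_sq_eq hM hβ hDpos hTpos hη
  have hrate : 0 ≤ √(M * β) * D / √T := by positivity
  obtain rfl : g = fun t => frankWolfeGap K L (W t) := funext hg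
  calc (1 / (T : ℝ)) * ∑ t ∈ Finset.Icc 1 T, frankWolfeGap K L (W t)
      = (η * ∑ t ∈ Finset.Icc 1 T, frankWolfeGap K L (W t)) / (η * T) := by
        rw [mul_div_mul_left _ _ hηpos.ne', one_div_mul_eq_div]
    _ ≤ (M + T * (η * ε + β / 2 * η ^ 2 * D ^ 2)) / (η * T) := by gcongr
    _ = M / (η * T) + β / 2 * η * D ^ 2 + ε := by field_simp; ring
    _ ≤ 2 * √(M * β) * D / √T + ε := by
        linarith [show 2 * √(M * β) * D / √T = 2 * (√(M * β) * D / √T) by ring]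

/-- Convergence of idealized COLA (stochastic Frank-Wolfe with ε-approximate
linear optimization oracle): the average Frank-Wolfe gap is at most
`2√(Mβ)·D/√T + ε`. -/
theorem cola_convergence {d : ℕ} (K : Set (EuclideanSpace ℝ (Fin d)))
    (hK : Convex ℝ K) (hKc : IsCompact K) (hKne : K.Nonempty)
    (D β ε M : ℝ) (T : ℕ) (hT : 1 ≤ T)
    (hβ : 0 < β) (hε : 0 ≤ ε) (hM : 0 < M) (hDpos : 0 < D)
    (hD : ∀ x ∈ K, ∀ y ∈ K, ‖x - y‖ ≤ D)
    (L : EuclideanSpace ℝ (Fin d) → ℝ) (hL : Differentiable ℝ L)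
    (hsmooth : ∀ x ∈ K, ∀ y ∈ K, ‖gradient L x - gradient L y‖ ≤ β * ‖x - y‖)
    (hbound : ∀ x ∈ K, ∀ y ∈ K, |L x - L y| ≤ M)
    (η : ℝ) (hη : η = Real.sqrt M / (D * Real.sqrt (β * T))) (hη1 : η ≤ 1)
    (W V : ℕ → EuclideanSpace ℝ (Fin d))
    (hW1 : W 1 ∈ K) (hV : ∀ t, V t ∈ K)
    (horacle : ∀ t ∈ Finset.Icc 1 T,
      ⟪gradient L (W t), V t⟫ ≤ sInf ((fun U => ⟪gradient L (W t), U⟫) '' K) + ε)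
    (hupdate : ∀ t, W (t + 1) = W t + η • (V t - W t))
    (g : ℕ → ℝ)
    (hg : ∀ t, g t = sSup ((fun U => ⟪gradient L (W t), W t - U⟫) '' K)) :
    (1 / (T : ℝ)) * ∑ t ∈ Finset.Icc 1 T, g t ≤
      2 * Real.sqrt (M * β) * D / Real.sqrt T + ε :=
  cola_convergence_general K hK hKc hKne D β ε M T hT hβ hM hDpos hD L hL hsmooth hbound η hη hη1 W
    V hW1 hV horacle hupdate g hg
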